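/- arXiv:2308.08644 — 2 statements merged into one kernel-verified Lean document; each statement's English description precedes it below -/
import Mathlib

section
/- Fix λ > 0 and σ² > 0. For each r ∈ ℝ, the function θ ↦ λ cosh θ + θ²/(2σ²) − rθ on ℝ is strictly convex and attains a unique global minimizer θ*(r), which is the unique solution of λ sinh θ + θ/σ² = r. Moreover θ*(r) → +∞ as r → +∞; in particular the map r ↦ θ*(r) is unbounded, so for every β > 0 there exist r, r′ ∈ ℤ with r ≠ r′ and (θ*(r) − θ*(r′))² > β². Hence the single-comparison Poisson-GBT MAP estimator is not β-Lipschitz-resilient for any β > 0. -/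
open Filter

/-- For `λ, σ² > 0`, the single-comparison Poisson-GBT MAP objective
`θ ↦ λ cosh θ + θ²/(2σ²) - rθ` is strictly convex with a unique global minimizer
`θ*(r)`, characterized by `λ sinh θ + θ/σ² = r`; moreover `θ*(r) → ∞` as `r → ∞`,
so for every `β > 0` there are integers `r ≠ r'` with `(θ*(r) - θ*(r'))² > β²`:
the Poisson-GBT MAP estimator is not `β`-Lipschitz-resilient for any `β > 0`. -/
theorem poisson_gbt_not_lipschitz_resilient (lam s2 : ℝ) (hlam : 0 < lam) (hs2 : 0 < s2) :
    (∀ r : ℝ, StrictConvexOn ℝ Set.univ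
      (fun θ : ℝ => lam * Real.cosh θ + θ ^ 2 / (2 * s2) - r * θ)) ∧
    ∃ θstar : ℝ → ℝ,
      (∀ r : ℝ, ∀ θ : ℝ, θ ≠ θstar r →
        lam * Real.cosh (θstar r) + (θstar r) ^ 2 / (2 * s2) - r * θstar r
          < lam * Real.cosh θ + θ ^ 2 / (2 * s2) - r * θ) ∧
      (∀ r θ : ℝ, lam * Real.sinh θ + θ / s2 = r ↔ θ = θstar r) ∧
      Tendsto θstar atTop atTop ∧
      (∀ β : ℝ, 0 < β → ∃ r r' : ℤ, r ≠ r' ∧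
        (θstar (r : ℝ) - θstar (r' : ℝ)) ^ 2 > β ^ 2) := by
  -- the "score" function g θ = λ sinh θ + θ/σ²
  set g : ℝ → ℝ := fun θ => lam * Real.sinh θ + θ / s2 with hgdef
  have hgmono : StrictMono g := by
    intro a b hab
    have h1 : Real.sinh a < Real.sinh b := Real.sinh_lt_sinh.mpr hab
    have h2 : a / s2 < b / s2 := by
      exact div_lt_div_of_pos_right hab hs2
    simp only [hgdef]
    nlinarith
  have hgcont : Continuous g := by
    simp only [hgdef]; fun_prop
  have hgtop : Tendsto g atTop atTop := by
    have hle : (fun x : ℝ => x / s2) ≤ᶠ[atTop] g := by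
      filter_upwards [eventually_ge_atTop (0:ℝ)] with x hx
      have := Real.sinh_nonneg_iff.mpr hx
      simp only [hgdef]
      nlinarith
    exact tendsto_atTop_mono' atTop hle (tendsto_id.atTop_div_const hs2)
  have hgbot : Tendsto g atBot atBot := by
    have hle : g ≤ᶠ[atBot] (fun x : ℝ => x / s2) := by
      filter_upwards [eventually_le_atBot (0:ℝ)] with x hx
      have : Real.sinh x ≤ 0 := Real.sinh_nonpos_iff.mpr hx
      simp only [hgdef]
      nlinarith
    exact tendsto_atBot_mono' atBot hle (tendsto_id.atBot_div_const hs2)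
  have hgsurj : Function.Surjective g := hgcont.surjective hgtop hgbot
  set e := StrictMono.orderIsoOfSurjective g hgmono hgsurj with he
  set θstar : ℝ → ℝ := fun r => e.symm r with hθdef
  have hge : ∀ θ, e θ = g θ := fun θ => by
    rw [he, StrictMono.coe_orderIsoOfSurjective]
  have hginv : ∀ r, g (θstar r) = r := fun r => by
    rw [← hge]; exact e.apply_symm_apply r
  -- derivative facts
  have hder : ∀ r θ : ℝ, HasDerivAt
      (fun θ : ℝ => lam * Real.cosh θ + θ ^ 2 / (2 * s2) - r * θ) (g θ - r) θ := by
    intro r θ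
    have h1 : HasDerivAt (fun θ : ℝ => lam * Real.cosh θ) (lam * Real.sinh θ) θ :=
      (Real.hasDerivAt_cosh θ).const_mul lam
    have h2 : HasDerivAt (fun θ : ℝ => θ ^ 2 / (2 * s2)) (θ / s2) θ := by
      have := (hasDerivAt_pow 2 θ).div_const (2 * s2)
      convert this using 1
      · rfl
      · rfl
      · rw [div_eq_div_iff (by positivity) (by positivity)]; norm_num; ring
    have h3 : HasDerivAt (fun θ : ℝ => r * θ) r θ := by
      simpa using (hasDerivAt_id θ).const_mul r
    have := (h1.add h2).sub h3
    exact this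
  have hderiv_eq : ∀ r : ℝ, deriv (fun θ : ℝ => lam * Real.cosh θ + θ ^ 2 / (2 * s2) - r * θ)
      = fun θ => g θ - r := by
    intro r; funext θ; exact (hder r θ).deriv
  -- strict convexity
  have hconv : ∀ r : ℝ, StrictConvexOn ℝ Set.univ
      (fun θ : ℝ => lam * Real.cosh θ + θ ^ 2 / (2 * s2) - r * θ) := by
    intro r
    apply strictConvexOn_of_deriv2_pos convex_univ
    · exact (Continuous.continuousOn (by fun_prop))
    · intro x _
      have h2 : deriv^[2] (fun θ : ℝ => lam * Real.cosh θ + θ ^ 2 / (2 * s2) - r * θ) x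
          = lam * Real.cosh x + 1 / s2 := by
        rw [Function.iterate_succ, Function.iterate_one, Function.comp_apply, hderiv_eq]
        have h1 : HasDerivAt (fun θ : ℝ => g θ - r) (lam * Real.cosh x + 1 / s2) x := by
          have hs : HasDerivAt (fun θ : ℝ => lam * Real.sinh θ) (lam * Real.cosh x) x :=
            (Real.hasDerivAt_sinh x).const_mul lam
          have hl : HasDerivAt (fun θ : ℝ => θ / s2) (1 / s2) x := by
            simpa using (hasDerivAt_id x).div_const s2
          simpa [hgdef] using (hs.add hl).sub_const r
        exact h1.deriv
      rw [h2]
      have := Real.cosh_pos (x := x)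
      positivity
  refine ⟨hconv, θstar, ?_, ?_, ?_, ?_⟩
  · -- unique global minimizer
    intro r θ hθ
    set f : ℝ → ℝ := fun θ => lam * Real.cosh θ + θ ^ 2 / (2 * s2) - r * θ with hf
    have hfc : Continuous f := by simp only [hf]; fun_prop
    rcases lt_or_gt_of_ne hθ with hlt | hgt
    · -- θ < θ* : f strictly decreasing on [θ, θ*]
      have hanti : StrictAntiOn f (Set.Icc θ (θstar r)) := by
        apply strictAntiOn_of_deriv_neg (convex_Icc _ _) hfc.continuousOn
        intro x hx
        rw [interior_Icc] at hx
        rw [hf, hderiv_eq r]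
        have : g x < g (θstar r) := hgmono hx.2
        rw [hginv] at this
        show g x - r < 0
        linarith
      have := hanti (Set.left_mem_Icc.mpr hlt.le) (Set.right_mem_Icc.mpr hlt.le) hlt
      simpa [hf] using this
    · have hmono : StrictMonoOn f (Set.Icc (θstar r) θ) := by
        apply strictMonoOn_of_deriv_pos (convex_Icc _ _) hfc.continuousOn
        intro x hx
        rw [interior_Icc] at hx
        rw [hf, hderiv_eq r]
        have : g (θstar r) < g x := hgmono hx.1
        rw [hginv] at this
        show 0 < g x - r
        linarith
      have := hmono (Set.left_mem_Icc.mpr hgt.le) (Set.right_mem_Icc.mpr hgt.le) hgt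
      simpa [hf] using this
  · -- characterization
    intro r θ
    constructor
    · intro h
      have : g θ = g (θstar r) := by rw [hginv]; exact h
      exact hgmono.injective this
    · intro h; rw [h]; exact hginv r
  · -- tendsto
    apply Monotone.tendsto_atTop_atTop e.symm.monotone
    intro b
    exact ⟨e b, by simp⟩
  · -- unboundedness
    intro β hβ
    have htop : Tendsto θstar atTop atTop := by
      apply Monotone.tendsto_atTop_atTop e.symm.monotone
      intro b; exact ⟨e b, by simp⟩
    obtain ⟨N, hN⟩ := (tendsto_atTop.mp htop (θstar 0 + β + 1)).exists_forall_of_atTop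
    set r : ℤ := max ⌈N⌉ 1 with hr
    refine ⟨r, 0, ?_, ?_⟩
    · have : (1:ℤ) ≤ r := le_max_right _ _
      omega
    · have hrN : N ≤ (r : ℝ) := by
        calc N ≤ (⌈N⌉ : ℝ) := Int.le_ceil N
        _ ≤ (r : ℝ) := by exact_mod_cast le_max_left _ _
      have h1 : θstar 0 + β + 1 ≤ θstar (r : ℝ) := hN _ hrN
      have h2 : β < θstar (r : ℝ) - θstar ((0:ℤ) : ℝ) := by
        push_cast; linarith
      calc β ^ 2 < (θstar (r : ℝ) - θstar ((0:ℤ) : ℝ)) ^ 2 :=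
        pow_lt_pow_left₀ h2 hβ.le (by norm_num)
      _ ≤ _ := le_rfl
end

section
/- Let 𝒜 be a finite set, 𝒞 ⊆ 𝒜 × 𝒜 symmetric and irreflexive, σ², σ₀² > 0, and let M = D − σ₀²A_𝒞 where D is the diagonal matrix with entries 1/σ² + σ₀²·#{b : (ab) ∈ 𝒞} and A_𝒞 is the adjacency matrix of 𝒞. Define the linear estimator Θ*(R) = M^{−1} r̄(R), where r̄(R)_a = Σ_{b:(ab)∈𝒞} r_{ab}. Then Θ* is entrywise monotone: if R and R′ are comparison tuples indexed by 𝒞 with r_{ab} ≤ r′_{ab} for every (ab) ∈ 𝒞, then θ*_c(R) ≤ θ*_c(R′) for every c ∈ 𝒜. -/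
open Finset Matrix

/-- Monotonicity of the Gaussian-GBT MAP estimator: with `M = D - σ₀² A_C` as in the
closed-form solution and `r̄(R)_a = ∑_{b : (ab) ∈ C} R_{ab}`, the linear estimator
`Θ*(R) = M⁻¹ r̄(R)` is entrywise monotone in the comparisons: if `R_{ab} ≤ R'_{ab}` for
every `(ab) ∈ C`, then `θ*_c(R) ≤ θ*_c(R')` for every alternative `c`. -/
theorem gaussian_gbt_map_monotone {α : Type*} [Fintype α] [DecidableEq α]
    (C : Finset (α × α)) (hsymm : ∀ a b : α, (a, b) ∈ C → (b, a) ∈ C)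
    (hirr : ∀ a : α, (a, a) ∉ C)
    (s2 s02 : ℝ) (hs2 : 0 < s2) (hs02 : 0 < s02)
    (M : Matrix α α ℝ)
    (hM : M = Matrix.of fun a b =>
      (if a = b then 1 / s2 + s02 * ((univ.filter fun x => (a, x) ∈ C).card : ℝ) else 0)
        - s02 * (if (a, b) ∈ C then 1 else 0))
    (rbar : (α → α → ℝ) → α → ℝ)
    (hrbar : rbar = fun R a => ∑ b ∈ univ.filter (fun b => (a, b) ∈ C), R a b)
    (R R' : α → α → ℝ) (hle : ∀ a b : α, (a, b) ∈ C → R a b ≤ R' a b) :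
    ∀ c : α, (M⁻¹ *ᵥ rbar R) c ≤ (M⁻¹ *ᵥ rbar R') c := by
  -- notation for the degree
  set deg : α → ℝ := fun a => ((univ.filter fun x => (a, x) ∈ C).card : ℝ) with hdeg
  have hdiag : ∀ a, M a a = 1 / s2 + s02 * deg a := by
    intro a
    simp [hM, hirr a, hdeg]
  have hoff : ∀ a b, a ≠ b → M a b = - (s02 * (if (a, b) ∈ C then 1 else 0)) := by
    intro a b hab
    simp [hM, hab]
  have hoff_nonpos : ∀ a b, a ≠ b → M a b ≤ 0 := by
    intro a b hab
    rw [hoff a b hab]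
    have : (0:ℝ) ≤ if (a, b) ∈ C then 1 else 0 := by split_ifs <;> norm_num
    nlinarith
  have hsum_ind : ∀ a, ∑ b, (if (a, b) ∈ C then (1 : ℝ) else 0) = deg a := by
    intro a
    rw [Finset.sum_boole]
  -- row sums of M equal 1/s2
  have hrow : ∀ a, ∑ b, M a b = 1 / s2 := by
    intro a
    rw [Finset.sum_eq_add_sum_sdiff_singleton_of_mem (Finset.mem_univ a) (fun b => M a b)]
    have : ∀ b ∈ univ \ {a}, M a b = - (s02 * (if (a, b) ∈ C then 1 else 0)) := by
      intro b hb
      simp only [Finset.mem_sdiff, Finset.mem_singleton] at hb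
      exact hoff a b (fun h => hb.2 h.symm)
    rw [Finset.sum_congr rfl this, hdiag]
    have h2 : ∑ b ∈ univ \ {a}, - (s02 * (if (a, b) ∈ C then 1 else 0)) =
        - (s02 * deg a) := by
      rw [Finset.sum_neg_distrib, ← Finset.mul_sum]
      have : ∑ b ∈ univ \ {a}, (if (a, b) ∈ C then (1:ℝ) else 0)
          = ∑ b, (if (a, b) ∈ C then (1:ℝ) else 0) := by
        apply Finset.sum_subset (Finset.sdiff_subset)
        intro x _ hx
        simp only [Finset.mem_sdiff, Finset.mem_univ, true_and, Finset.mem_singleton,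
          not_not] at hx
        simp [hx, hirr a]
      rw [this, hsum_ind]
    rw [h2]; ring
  -- strict diagonal dominance
  have hdd : ∀ k, ∑ j ∈ Finset.univ.erase k, ‖M k j‖ < ‖M k k‖ := by
    intro k
    have h1 : ∑ j ∈ Finset.univ.erase k, ‖M k j‖ = s02 * deg k := by
      have : ∀ j ∈ Finset.univ.erase k, ‖M k j‖ = s02 * (if (k, j) ∈ C then 1 else 0) := by
        intro j hj
        have hjk : k ≠ j := fun h => (Finset.mem_erase.mp hj).1 h.symm
        rw [hoff k j hjk, norm_neg, Real.norm_eq_abs, abs_of_nonneg (by positivity)]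
      rw [Finset.sum_congr rfl this, ← Finset.mul_sum]
      congr 1
      have : ∑ j ∈ Finset.univ.erase k, (if (k, j) ∈ C then (1:ℝ) else 0)
          = ∑ j, (if (k, j) ∈ C then (1:ℝ) else 0) := by
        apply Finset.sum_subset (Finset.erase_subset _ _)
        intro x _ hx
        simp only [Finset.mem_erase, Finset.mem_univ, and_true, not_not] at hx
        simp [hx, hirr k]
      exact this.trans (hsum_ind k)
    have hdegpos : 0 ≤ deg k := by simp [hdeg]
    rw [h1, hdiag, Real.norm_eq_abs, abs_of_pos (by positivity)]
    have : 0 < 1 / s2 := by positivity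
    linarith
  have hdet : M.det ≠ 0 := det_ne_zero_of_sum_row_lt_diag hdd
  have hunit : IsUnit M.det := isUnit_iff_ne_zero.mpr hdet
  -- the difference vector
  set y : α → ℝ := fun a => rbar R' a - rbar R a with hy
  have hynn : ∀ a, 0 ≤ y a := by
    intro a
    simp only [hy, hrbar]
    rw [← Finset.sum_sub_distrib]
    apply Finset.sum_nonneg
    intro b hb
    have := hle a b (Finset.mem_filter.mp hb).2
    linarith
  set x : α → ℝ := M⁻¹ *ᵥ y with hx
  have hMx : M *ᵥ x = y := by
    rw [hx, Matrix.mulVec_mulVec, Matrix.mul_nonsing_inv M hunit, Matrix.one_mulVec]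
  -- minimum principle: x is nonneg
  have hxnn : ∀ a, 0 ≤ x a := by
    by_contra hcon
    push_neg at hcon
    obtain ⟨a0, ha0⟩ := hcon
    obtain ⟨c, -, hc⟩ := Finset.exists_min_image Finset.univ x ⟨a0, Finset.mem_univ a0⟩
    have hcneg : x c < 0 := lt_of_le_of_lt (hc a0 (Finset.mem_univ a0)) ha0
    have key : (M *ᵥ x) c ≤ (∑ b, M c b) * x c := by
      rw [Matrix.mulVec, dotProduct, Finset.sum_mul]
      apply Finset.sum_le_sum
      intro b _
      rcases eq_or_ne c b with rfl | hne
      · exact le_refl _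
      · exact mul_le_mul_of_nonpos_left (hc b (Finset.mem_univ b)) (hoff_nonpos c b hne)
    rw [hMx, hrow c] at key
    have h12 : 0 < 1 / s2 := by positivity
    have hneg : 1 / s2 * x c < 0 := mul_neg_of_pos_of_neg h12 hcneg
    exact absurd (key.trans_lt hneg) (not_lt.mpr (hynn c))
  -- conclude
  intro c
  have hsub : (M⁻¹ *ᵥ rbar R') c - (M⁻¹ *ᵥ rbar R) c = x c := by
    rw [hx, hy]
    have : (fun a => rbar R' a - rbar R a) = (rbar R') - (rbar R) := rfl
    rw [this, Matrix.mulVec_sub]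
    simp [Pi.sub_apply]
  have := hxnn c
  linarith
end
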